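/- Let ĥ ∈ ℂ^n, Ẑ ∈ ℂ^{m×n}, v ∈ ℂ^m with all entries of unit modulus, w ∈ ℂ^n, and ε_d, ε_c ≥ 0. Then the infimum of |(ĥ + Δh)^H w + v^H(Ẑ + ΔZ)w| over all Δh with ‖Δh‖₂ ≤ ε_d and ΔZ with ‖ΔZ‖_F ≤ ε_c equals max{ |(ĥ^H + v^H Ẑ)w| − (ε_d + √m ε_c)‖w‖₂, 0 }. -/

import Mathlib

noncomputable def vnorm {n : ℕ} (x : Fin n → ℂ) : ℝ :=
  Real.sqrt (∑ i, ‖x i‖ ^ 2)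

noncomputable def fnorm {m n : ℕ} (Z : Fin m → Fin n → ℂ) : ℝ :=
  Real.sqrt (∑ i, ∑ j, ‖Z i j‖ ^ 2)

noncomputable def dotH {n : ℕ} (a w : Fin n → ℂ) : ℂ :=
  ∑ i, (starRingEnd ℂ) (a i) * w i

noncomputable def quadH {m n : ℕ} (v : Fin m → ℂ) (Z : Fin m → Fin n → ℂ)
    (w : Fin n → ℂ) : ℂ :=
  ∑ i, ∑ j, (starRingEnd ℂ) (v i) * Z i j * w j

/-!
Write `A = (ĥ^H + v^H Ẑ) w` and `ρ = (ε_d + √m ε_c) ‖w‖₂`. An admissible perturbation moves `A`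
by `D = Δh^H w + v^H ΔZ w`, and Cauchy–Schwarz (over `j`, and over pairs `(i, j)` for
`v^H ΔZ w = ∑ conj (v_i conj ΔZ_ij) w_j`, using `|v_i| = 1`) gives `|D| ≤ ρ`. Conversely every
`D` with `|D| ≤ ρ` is attained by the rank-one perturbations `Δh ∝ w`, `ΔZ ∝ v w^H`. Hence the
infimum is `min_{|D| ≤ ρ} |A + D| = max (|A| - ρ, 0)`.
-/

open Finset ComplexConjugate Metric

theorem sInf_norm_add_closedBall {E : Type*} [SeminormedAddCommGroup E] [NormedSpace ℝ E]
    (A : E) {ρ : ℝ} (hρ : 0 ≤ ρ) :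
    sInf ((fun D => ‖A + D‖) '' closedBall 0 ρ) = max (‖A‖ - ρ) 0 := by
  refine IsLeast.csInf_eq ⟨?_, ?_⟩
  · by_cases hA : ‖A‖ = 0
    · refine ⟨0, mem_closedBall_self hρ, ?_⟩
      simp [hA, hρ]
    · refine ⟨-(min ‖A‖ ρ / ‖A‖) • A, ?_, ?_⟩
      · rw [mem_closedBall_zero_iff, norm_smul, norm_neg, Real.norm_of_nonneg (by positivity),
          div_mul_cancel₀ _ hA]
        exact min_le_right _ _
      · have hs : min ‖A‖ ρ / ‖A‖ ≤ 1 := div_le_one_of_le₀ (min_le_left _ _) (norm_nonneg A)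
        have hsub : A + -(min ‖A‖ ρ / ‖A‖) • A = (1 - min ‖A‖ ρ / ‖A‖) • A := by
          rw [sub_smul, one_smul, neg_smul, sub_eq_add_neg]
        dsimp only
        rw [hsub, norm_smul, Real.norm_of_nonneg (sub_nonneg.2 hs), sub_mul, one_mul, div_mul_cancel₀ _ hA]
        rcases le_total ‖A‖ ρ with h | h <;> simp [h]
  · rintro _ ⟨D, hD, rfl⟩
    exact max_le ((sub_le_sub_left (mem_closedBall_zero_iff.1 hD) _).trans
      (norm_sub_le_norm_add A D)) (norm_nonneg _)

theorem norm_sum_conj_mul_le {ι : Type*} (s : Finset ι) (a b : ι → ℂ) :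
    ‖∑ i ∈ s, conj (a i) * b i‖ ≤ √(∑ i ∈ s, ‖a i‖ ^ 2) * √(∑ i ∈ s, ‖b i‖ ^ 2) :=
  calc ‖∑ i ∈ s, conj (a i) * b i‖ ≤ ∑ i ∈ s, ‖a i‖ * ‖b i‖ :=
        (norm_sum_le _ _).trans_eq (by simp)
    _ ≤ _ := Real.sum_mul_le_sqrt_mul_sqrt s _ _

section

variable {m n : ℕ}

theorem vnorm_nonneg (x : Fin n → ℂ) : 0 ≤ vnorm x := Real.sqrt_nonneg _

theorem vnorm_sq (x : Fin n → ℂ) : vnorm x ^ 2 = ∑ i, ‖x i‖ ^ 2 :=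
  Real.sq_sqrt (sum_nonneg fun _ _ => sq_nonneg _)

theorem vnorm_smul (c : ℂ) (x : Fin n → ℂ) : vnorm (c • x) = ‖c‖ * vnorm x := by
  simp only [vnorm, Pi.smul_apply, smul_eq_mul, norm_mul, mul_pow, ← mul_sum]
  rw [Real.sqrt_mul (sq_nonneg _), Real.sqrt_sq (norm_nonneg _)]

theorem sum_conj_mul_self (x : Fin n → ℂ) : ∑ i, conj (x i) * x i = ((vnorm x ^ 2 : ℝ) : ℂ) := by
  simp only [Complex.conj_mul', vnorm_sq]
  push_cast
  rfl

theorem dotH_add (a b w : Fin n → ℂ) : dotH (a + b) w = dotH a w + dotH b w := by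
  simp [dotH, add_mul, sum_add_distrib]

theorem quadH_add (v : Fin m → ℂ) (Y Z : Fin m → Fin n → ℂ) (w : Fin n → ℂ) :
    quadH v (fun i j => Y i j + Z i j) w = quadH v Y w + quadH v Z w := by
  simp [quadH, mul_add, add_mul, sum_add_distrib]

theorem norm_dotH_le (a w : Fin n → ℂ) : ‖dotH a w‖ ≤ vnorm a * vnorm w :=
  norm_sum_conj_mul_le _ a w

theorem norm_quadH_le {v : Fin m → ℂ} (hv : ∀ i, ‖v i‖ = 1) (Z : Fin m → Fin n → ℂ)
    (w : Fin n → ℂ) : ‖quadH v Z w‖ ≤ √m * fnorm Z * vnorm w := by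
  have hquad : quadH v Z w = ∑ p ∈ univ ×ˢ univ, conj (v p.1 * conj (Z p.1 p.2)) * w p.2 := by
    rw [sum_product]
    simp [quadH]
  have hZ : ∑ p ∈ univ ×ˢ univ, ‖v p.1 * conj (Z p.1 p.2)‖ ^ 2 = ∑ i, ∑ j, ‖Z i j‖ ^ 2 := by
    rw [sum_product]
    simp [hv]
  have hw : ∑ p ∈ (univ : Finset (Fin m)) ×ˢ univ, ‖w p.2‖ ^ 2 = m * ∑ j, ‖w j‖ ^ 2 := by
    rw [sum_product]
    simp
  calc ‖quadH v Z w‖ ≤ fnorm Z * √(m * ∑ j, ‖w j‖ ^ 2) := by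
        rw [hquad, fnorm, ← hZ, ← hw]
        exact norm_sum_conj_mul_le _ _ _
    _ = √m * fnorm Z * vnorm w := by
        rw [Real.sqrt_mul (Nat.cast_nonneg _), vnorm]
        ring

theorem norm_perturbation_le {v : Fin m → ℂ} (hv : ∀ i, ‖v i‖ = 1) (w : Fin n → ℂ)
    {εd εc : ℝ} {Δh : Fin n → ℂ} {ΔZ : Fin m → Fin n → ℂ}
    (hΔh : vnorm Δh ≤ εd) (hΔZ : fnorm ΔZ ≤ εc) :
    ‖dotH Δh w + quadH v ΔZ w‖ ≤ (εd + √m * εc) * vnorm w := by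
  have hW := vnorm_nonneg w
  calc ‖dotH Δh w + quadH v ΔZ w‖ ≤ vnorm Δh * vnorm w + √m * fnorm ΔZ * vnorm w :=
        (norm_add_le _ _).trans (add_le_add (norm_dotH_le _ _) (norm_quadH_le hv _ _))
    _ ≤ εd * vnorm w + √m * εc * vnorm w := by gcongr
    _ = (εd + √m * εc) * vnorm w := by ring

theorem dotH_conj_smul_self (c : ℂ) (w : Fin n → ℂ) :
    dotH (conj c • w) w = c * ((vnorm w ^ 2 : ℝ) : ℂ) := by
  simp only [dotH, Pi.smul_apply, smul_eq_mul, map_mul, Complex.conj_conj, mul_assoc, ← mul_sum,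
    sum_conj_mul_self]

theorem quadH_rankOne {v : Fin m → ℂ} (hv : ∀ i, ‖v i‖ = 1) (c : ℂ) (w : Fin n → ℂ) :
    quadH v (fun i j => c * v i * conj (w j)) w = m * c * ((vnorm w ^ 2 : ℝ) : ℂ) := by
  have hv' : ∀ i, conj (v i) * v i = 1 := fun i => by simp [Complex.conj_mul', hv]
  calc quadH v (fun i j => c * v i * conj (w j)) w
      = ∑ i : Fin m, c * (conj (v i) * v i) * ∑ j, conj (w j) * w j := by
        simp only [quadH, mul_sum]
        exact sum_congr rfl fun i _ => sum_congr rfl fun j _ => by ring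
    _ = m * c * ((vnorm w ^ 2 : ℝ) : ℂ) := by
        simp [hv', sum_conj_mul_self, mul_assoc]

theorem fnorm_rankOne {v : Fin m → ℂ} (hv : ∀ i, ‖v i‖ = 1) (c : ℂ) (w : Fin n → ℂ) :
    fnorm (fun i j => c * v i * conj (w j)) = √m * ‖c‖ * vnorm w := by
  simp only [fnorm, vnorm, norm_mul, hv, Complex.norm_conj, mul_one, mul_pow, ← mul_sum,
    sum_const, card_univ, Fintype.card_fin, nsmul_eq_mul]
  rw [Real.sqrt_mul (by positivity), Real.sqrt_mul (by positivity), Real.sqrt_sq (norm_nonneg _)]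
  ring

theorem exists_perturbation_eq {v : Fin m → ℂ} (hv : ∀ i, ‖v i‖ = 1) (w : Fin n → ℂ)
    {εd εc : ℝ} (hεd : 0 ≤ εd) (hεc : 0 ≤ εc) {D : ℂ}
    (hD : ‖D‖ ≤ (εd + √m * εc) * vnorm w) :
    ∃ (Δh : Fin n → ℂ) (ΔZ : Fin m → Fin n → ℂ),
      vnorm Δh ≤ εd ∧ fnorm ΔZ ≤ εc ∧ dotH Δh w + quadH v ΔZ w = D := by
  set W := vnorm w
  set ρ := (εd + √m * εc) * W
  rcases (mul_nonneg (by positivity : 0 ≤ εd + √m * εc) (vnorm_nonneg w)).eq_or_lt with hρ | hρ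
  · have hD0 : D = 0 := norm_le_zero_iff.1 (hρ ▸ hD)
    exact ⟨0, 0, by simpa [vnorm], by simpa [fnorm], by simp [dotH, quadH, hD0]⟩
  have hW : 0 < W := pos_of_mul_pos_right hρ (by positivity)
  -- the worst-case directions `w` and `v w^H`, rescaled by `t = D / ρ`
  set t : ℂ := D / (ρ : ℂ)
  have ht : ‖t‖ ≤ 1 := by
    rw [norm_div, Complex.norm_real, Real.norm_of_nonneg hρ.le]
    exact div_le_one_of_le₀ hD hρ.le
  refine ⟨conj (t * (εd / W : ℝ)) • w, fun i j => t * (εc / (√m * W) : ℝ) * v i * conj (w j),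
    ?_, ?_, ?_⟩
  · rw [vnorm_smul, Complex.norm_conj, norm_mul, Complex.norm_real,
      Real.norm_of_nonneg (by positivity), mul_assoc, div_mul_cancel₀ _ hW.ne']
    exact mul_le_of_le_one_left hεd ht
  · rw [fnorm_rankOne hv, norm_mul, Complex.norm_real, Real.norm_of_nonneg (by positivity)]
    calc √m * (‖t‖ * (εc / (√m * W))) * W = ‖t‖ * εc * (√m * (√m)⁻¹) * (W * W⁻¹) := by ring
      _ ≤ 1 * εc * 1 * 1 := by
        rw [mul_inv_cancel₀ hW.ne']
        gcongr
        exact mul_inv_le_one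
      _ = εc := by ring
  · have hρ_eq : εd / W * W ^ 2 + m * (εc / (√m * W)) * W ^ 2 = ρ := by
      calc εd / W * W ^ 2 + m * (εc / (√m * W)) * W ^ 2
          = εd * (W ^ 2 / W) + (m / √m) * εc * (W ^ 2 / W) := by ring
        _ = ρ := by rw [Real.div_sqrt, pow_two, mul_div_cancel_right₀ _ hW.ne']; ring
    rw [dotH_conj_smul_self, quadH_rankOne hv]
    calc t * ((εd / W : ℝ) : ℂ) * ((W ^ 2 : ℝ) : ℂ)
          + m * (t * ((εc / (√m * W) : ℝ) : ℂ)) * ((W ^ 2 : ℝ) : ℂ)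
        = t * ((εd / W * W ^ 2 + m * (εc / (√m * W)) * W ^ 2 : ℝ) : ℂ) := by push_cast; ring
      _ = D := by rw [hρ_eq, div_mul_cancel₀ _ (Complex.ofReal_ne_zero.2 hρ.ne')]

end

/-- Lemma 1, first claim: the worst-case (infimum) value of
`|(hhat + Δh)^H w + v^H (Zhat + ΔZ) w|` over `‖Δh‖₂ ≤ ε_d`, `‖ΔZ‖_F ≤ ε_c` equals
`max { |(hhat^H + v^H Zhat) w| − (ε_d + √m ε_c) ‖w‖₂ , 0 }`. -/
theorem stmt2 {m n : ℕ} (hhat : Fin n → ℂ) (Zhat : Fin m → Fin n → ℂ)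
    (v : Fin m → ℂ) (hv : ∀ i, ‖v i‖ = 1)
    (w : Fin n → ℂ) (εd εc : ℝ) (hεd : 0 ≤ εd) (hεc : 0 ≤ εc) :
    sInf { r : ℝ | ∃ (Δh : Fin n → ℂ) (ΔZ : Fin m → Fin n → ℂ),
        vnorm Δh ≤ εd ∧ fnorm ΔZ ≤ εc ∧
        r = ‖dotH (hhat + Δh) w + quadH v (fun i j => Zhat i j + ΔZ i j) w‖ }
      = max (‖dotH hhat w + quadH v Zhat w‖
              - (εd + Real.sqrt m * εc) * vnorm w) 0 := by
  have hρ : 0 ≤ (εd + √m * εc) * vnorm w := mul_nonneg (by positivity) (vnorm_nonneg w)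
  rw [← sInf_norm_add_closedBall _ hρ]
  congr 1
  ext r
  constructor
  · rintro ⟨Δh, ΔZ, hΔh, hΔZ, rfl⟩
    refine ⟨dotH Δh w + quadH v ΔZ w,
      mem_closedBall_zero_iff.2 (norm_perturbation_le hv w hΔh hΔZ), ?_⟩
    simp only [dotH_add, quadH_add]
    ring_nf
  · rintro ⟨D, hD, rfl⟩
    obtain ⟨Δh, ΔZ, hΔh, hΔZ, rfl⟩ :=
      exists_perturbation_eq hv w hεd hεc (mem_closedBall_zero_iff.1 hD)
    refine ⟨Δh, ΔZ, hΔh, hΔZ, ?_⟩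
    simp only [dotH_add, quadH_add]
    ring_nf
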